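/- Let L_n be the directed linear graph on vertices 1,...,n with directed edges (i,i+1) for 1 ≤ i < n. Then the eulerian magnitude homology of L_n is nontrivial only in bidegrees (0,0) and (1,1), where it has ranks n and n−1 respectively. -/

import Mathlib

open scoped Classical

/-- Reachability in a directed graph given by its adjacency relation. -/
def dreach {V : Type} (A : V → V → Prop) : V → V → Prop :=
  Relation.ReflTransGen A

/-- Directed distance: minimal length of a directed path from `x` to `y`. -/
noncomputable def ddist {V : Type} (A : V → V → Prop) (x y : V) : ℕ :=
  sInf {n | ∃ p : Fin (n + 1) → V, p 0 = x ∧ p (Fin.last n) = y ∧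
    ∀ i : Fin n, A (p i.castSucc) (p i.succ)}

/-- Length of a tuple of vertices: sum of consecutive directed distances. -/
noncomputable def dlen {V : Type} (A : V → V → Prop) {k : ℕ} (x : Fin (k + 1) → V) : ℕ :=
  ∑ i : Fin k, ddist A (x i.castSucc) (x i.succ)

/-- Generators of the (k,ℓ) eulerian magnitude chain group of a directed graph:
tuples of k+1 pairwise distinct vertices, each reachable from the previous one,
of total length ℓ. -/
def demcGen {V : Type} (A : V → V → Prop) (k ℓ : ℕ) : Set (Fin (k + 1) → V) :=
  {x | Function.Injective x ∧ (∀ i : Fin k, dreach A (x i.castSucc) (x i.succ)) ∧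
    dlen A x = ℓ}

/-- The (k,ℓ) eulerian magnitude chain group of a directed graph. -/
abbrev dEMC {V : Type} (A : V → V → Prop) (k ℓ : ℕ) : Type :=
  demcGen A k ℓ →₀ ℤ

/-- The `i`-th face: delete the `i`-th vertex if the result is again a generator,
and `0` otherwise. -/
noncomputable def demcFace {V : Type} (A : V → V → Prop) (k ℓ : ℕ) (i : Fin (k + 2))
    (x : demcGen A (k + 1) ℓ) : dEMC A k ℓ :=
  if h : ((x : Fin (k + 2) → V) ∘ i.succAbove) ∈ demcGen A k ℓ then
    Finsupp.single ⟨_, h⟩ 1 else 0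

/-- The eulerian magnitude differential: alternating sum of interior-vertex deletions. -/
noncomputable def demcD {V : Type} (A : V → V → Prop) (k ℓ : ℕ) :
    dEMC A (k + 1) ℓ →ₗ[ℤ] dEMC A k ℓ :=
  Finsupp.lift (dEMC A k ℓ) ℤ (demcGen A (k + 1) ℓ) fun x =>
    ∑ i : Fin (k + 2),
      if i = 0 ∨ i = Fin.last (k + 1) then 0 else ((-1 : ℤ) ^ (i : ℕ)) • demcFace A k ℓ i x

/-- Cycles of the eulerian magnitude chain complex in degree `k`. -/
noncomputable def demcCycles {V : Type} (A : V → V → Prop) (k ℓ : ℕ) :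
    Submodule ℤ (dEMC A k ℓ) :=
  match k with
  | 0 => ⊤
  | k + 1 => LinearMap.ker (demcD A k ℓ)

/-- Eulerian magnitude homology of a directed graph in bidegree (k,ℓ). -/
noncomputable abbrev dEMH {V : Type} (A : V → V → Prop) (k ℓ : ℕ) :=
  demcCycles A k ℓ ⧸
    Submodule.comap (demcCycles A k ℓ).subtype (LinearMap.range (demcD A k ℓ))

/-- The directed linear graph on `n` vertices, with edges `i → i+1`. -/
def linGraph (n : ℕ) : Fin n → Fin n → Prop := fun i j => (j : ℕ) = (i : ℕ) + 1

/-!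
In `L_n` a generator of `EMC_{k,ℓ}` is a strictly increasing tuple `x₀ < ⋯ < x_k` with
`ℓ = x_k - x₀`, and every interior face of a generator is again a generator. Inserting `x₀ + 1`
as second vertex (giving `0` when it is already there) is a cone operator `h` with
`∂h + h∂ = -id` in every degree `k ≥ 1` except in bidegree `(1,1)`, so the homology vanishes
there, while in degree `0` all generators have length `0`. In bidegrees `(0,0)` and `(1,1)` there
are no chains one degree higher and no boundaries, so the homology is free on the generators:
the `n` vertices and the `n - 1` edges.
-/

lemma linGraph_eq_covBy (n : ℕ) : linGraph n = (· ⋖ ·) := by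
  funext a b
  simp only [linGraph, Fin.covBy_iff, Nat.covBy_iff_add_one_eq, eq_comm]

lemma dreach_linGraph_iff {n : ℕ} {a b : Fin n} : dreach (linGraph n) a b ↔ a ≤ b := by
  rw [le_iff_reflTransGen_covBy, dreach, linGraph_eq_covBy]

lemma linGraph_path_iff {n m : ℕ} {a b : Fin n} :
    (∃ p : Fin (m + 1) → Fin n, p 0 = a ∧ p (Fin.last m) = b ∧
      ∀ i : Fin m, linGraph n (p i.castSucc) (p i.succ)) ↔ (b : ℕ) = a + m := by
  constructor
  · rintro ⟨p, rfl, rfl, hp⟩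
    have hval : ∀ i : Fin (m + 1), (p i : ℕ) = p 0 + i := by
      intro i
      induction i using Fin.induction with
      | zero => simp
      | succ i ih => rw [hp i, ih, Fin.val_succ, Fin.val_castSucc, add_assoc]
    simpa using hval (Fin.last m)
  · intro h
    refine ⟨fun i => ⟨a + i, by omega⟩, ?_, ?_, fun i => ?_⟩ <;> simp [Fin.ext_iff, linGraph, h]
    omega

lemma ddist_linGraph {n : ℕ} {a b : Fin n} (h : a ≤ b) :
    ddist (linGraph n) a b = b - a := by
  have hpaths : {m | ∃ p : Fin (m + 1) → Fin n, p 0 = a ∧ p (Fin.last m) = b ∧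
      ∀ i : Fin m, linGraph n (p i.castSucc) (p i.succ)} = {(b : ℕ) - a} := by
    ext m
    rw [Set.mem_ofPred_eq, linGraph_path_iff, Set.mem_singleton_iff]
    have : (a : ℕ) ≤ b := h
    omega
  rw [ddist, hpaths, csInf_singleton]

lemma dlen_linGraph {n k : ℕ} {x : Fin (k + 1) → Fin n} (hx : Monotone x) :
    dlen (linGraph n) x = x (Fin.last k) - x 0 := by
  have hstep (i : Fin k) : (ddist (linGraph n) (x i.castSucc) (x i.succ) : ℤ) =
      (x i.succ : ℕ) - (x i.castSucc : ℕ) := by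
    rw [ddist_linGraph (hx (Fin.castSucc_le_succ i)), Nat.cast_sub (hx (Fin.castSucc_le_succ i))]
  have h0 : (x 0 : ℕ) ≤ x (Fin.last k) := hx (Fin.zero_le _)
  zify [h0]
  rw [dlen, Nat.cast_sum, Finset.sum_congr rfl fun i _ => hstep i]
  cases k with
  | zero => simp
  | succ k =>
    rw [← Finset.Iic_top, Fin.top_eq_last, Fin.sum_Iic_sub (Fin.last k) (fun i => ((x i : ℕ) : ℤ)),
      Fin.succ_last]

lemma mem_demcGen_linGraph_iff {n k ℓ : ℕ} {x : Fin (k + 1) → Fin n} :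
    x ∈ demcGen (linGraph n) k ℓ ↔ StrictMono x ∧ (x (Fin.last k) : ℕ) = x 0 + ℓ := by
  simp only [demcGen, Set.mem_ofPred_eq, dreach_linGraph_iff, ← Fin.monotone_iff_le_succ]
  constructor
  · rintro ⟨hinj, hmono, rfl⟩
    have : (x 0 : ℕ) ≤ x (Fin.last k) := hmono (Fin.zero_le _)
    exact ⟨hmono.strictMono_of_injective hinj, by rw [dlen_linGraph hmono]; omega⟩
  · rintro ⟨hsm, hlast⟩
    exact ⟨hsm.injective, hsm.monotone, by rw [dlen_linGraph hsm.monotone]; omega⟩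

section Tuple

variable {α : Type*} {m : ℕ}

lemma Fin.insertNth_one_cons (v a : α) (q : Fin m → α) :
    (Fin.insertNth 1 v (Fin.cons a q : Fin (m + 1) → α) : Fin (m + 2) → α) =
      Fin.cons a (Fin.cons v q : Fin (m + 1) → α) := by
  rw [← Fin.succ_zero_eq_one, Fin.insertNth_succ_cons, Fin.insertNth_zero']

lemma Fin.insertNth_one_comp_succAbove_succ (v : α) (p : Fin (m + 2) → α) {j : Fin (m + 2)}
    (hj : j ≠ 0) :
    (Fin.insertNth 1 v p : Fin (m + 3) → α) ∘ j.succ.succAbove =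
      Fin.insertNth 1 v (p ∘ j.succAbove) := by
  obtain ⟨j, rfl⟩ := Fin.exists_succ_eq.mpr hj
  rw [← Fin.cons_self_tail p, Fin.insertNth_one_cons, Fin.cons_comp_succ_succAbove, Fin.cons_comp_succ_succAbove,
    Fin.insertNth_one_cons]
  exact congrArg _ (Fin.cons_comp_succ_succAbove v _ j)

lemma Fin.insertNth_one_apply_zero (v : α) (p : Fin (m + 2) → α) :
    (Fin.insertNth 1 v p : Fin (m + 3) → α) 0 = p 0 := by
  rw [← Fin.cons_self_tail p, Fin.insertNth_one_cons]
  rfl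

lemma Fin.insertNth_one_apply_last (v : α) (p : Fin (m + 2) → α) :
    (Fin.insertNth 1 v p : Fin (m + 3) → α) (Fin.last (m + 2)) = p (Fin.last (m + 1)) := by
  rw [← Fin.succAbove_ne_last_last (Fin.one_lt_last.ne), Fin.insertNth_apply_succAbove]

lemma Fin.not_injective_insertNth_one (p : Fin (m + 2) → α) :
    ¬ Function.Injective (Fin.insertNth 1 (p 1) p : Fin (m + 3) → α) := fun h =>
  Fin.succAbove_ne 1 1 <| h <| by rw [Fin.insertNth_apply_succAbove, Fin.insertNth_apply_same]

lemma Fin.strictMono_insertNth_one [Preorder α] {p : Fin (m + 2) → α} (hp : StrictMono p)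
    {v : α} (h0 : p 0 < v) (h1 : v < p 1) : StrictMono (Fin.insertNth 1 v p : Fin (m + 3) → α) :=
  Fin.strictMono_insertNth hp 0 v h0 h1

end Tuple

section Chains

variable {V : Type} (A : V → V → Prop)

lemma demcD_single {k ℓ : ℕ} (x : demcGen A (k + 1) ℓ) :
    demcD A k ℓ (Finsupp.single x 1) =
      ∑ i : Fin k, (-1 : ℤ) ^ ((i : ℕ) + 1) • demcFace A k ℓ i.castSucc.succ x := by
  rw [demcD, Finsupp.lift_apply, Finsupp.sum_single_index (by simp), one_smul,
    Fin.sum_univ_succ, Fin.sum_univ_castSucc]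
  simp [Fin.succ_ne_zero, Fin.castSucc_ne_last]

lemma demcFace_of_mem {k ℓ : ℕ} (i : Fin (k + 2)) (x : demcGen A (k + 1) ℓ)
    (h : (x : Fin (k + 2) → V) ∘ i.succAbove ∈ demcGen A k ℓ) :
    demcFace A k ℓ i x = Finsupp.single ⟨_, h⟩ 1 :=
  dif_pos h

lemma demcD_zero (ℓ : ℕ) : demcD A 0 ℓ = 0 :=
  Finsupp.lhom_ext' fun x => LinearMap.ext_ring <| by simp [demcD_single]

lemma demcD_eq_zero_of_isEmpty {k ℓ : ℕ} [IsEmpty (demcGen A (k + 1) ℓ)] : demcD A k ℓ = 0 :=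
  Subsingleton.elim _ _

lemma isEmpty_demcGen_zero {ℓ : ℕ} (hℓ : ℓ ≠ 0) : IsEmpty (demcGen A 0 ℓ) :=
  ⟨fun x => hℓ (x.2.2.2.symm.trans (by simp [dlen]))⟩

lemma dEMH_subsingleton_of_le_range {k ℓ : ℕ}
    (h : demcCycles A k ℓ ≤ LinearMap.range (demcD A k ℓ)) : Subsingleton (dEMH A k ℓ) := by
  rw [Submodule.Quotient.subsingleton_iff, Submodule.eq_top_iff']
  exact fun z => h z.2

lemma finrank_dEMH_of_cycles_eq_top {k ℓ : ℕ} (hZ : demcCycles A k ℓ = ⊤)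
    (hB : demcD A k ℓ = 0) : Module.finrank ℤ (dEMH A k ℓ) = Nat.card (demcGen A k ℓ) := by
  have hbot : Submodule.comap (demcCycles A k ℓ).subtype (LinearMap.range (demcD A k ℓ)) = ⊥ := by
    rw [hB, LinearMap.range_zero, Submodule.comap_bot, Submodule.ker_subtype]
  rw [((Submodule.quotEquivOfEqBot _ hbot).trans
      ((LinearEquiv.ofEq _ _ hZ).trans Submodule.topEquiv)).finrank_eq,
    Module.finrank_eq_nat_card_basis Finsupp.basisSingleOne]

def demcGenZeroEquiv : demcGen A 0 0 ≃ V :=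
  (Equiv.subtypeUnivEquiv fun _ =>
    ⟨fun _ _ _ => Subsingleton.elim (α := Fin 1) _ _, finZeroElim, by simp [dlen]⟩).trans
    (Equiv.funUnique (Fin 1) V)

lemma insertNth_one_self_not_mem_demcGen {k ℓ : ℕ} (p : Fin (k + 2) → V) :
    (Fin.insertNth 1 (p 1) p : Fin (k + 3) → V) ∉ demcGen A (k + 2) ℓ :=
  fun h => Fin.not_injective_insertNth_one p h.1

noncomputable def demcCone (c : V → V) (k ℓ : ℕ) : dEMC A k ℓ →ₗ[ℤ] dEMC A (k + 1) ℓ :=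
  Finsupp.lift (dEMC A (k + 1) ℓ) ℤ (demcGen A k ℓ) fun x =>
    if h : (Fin.insertNth 1 (c (x.1 0)) x.1 : Fin (k + 2) → V) ∈ demcGen A (k + 1) ℓ then
      Finsupp.single ⟨_, h⟩ 1 else 0

lemma demcCone_single_of_mem (c : V → V) {k ℓ : ℕ} (x : demcGen A k ℓ)
    (h : (Fin.insertNth 1 (c (x.1 0)) x.1 : Fin (k + 2) → V) ∈ demcGen A (k + 1) ℓ) :
    demcCone A c k ℓ (Finsupp.single x 1) = Finsupp.single ⟨_, h⟩ 1 := by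
  rw [demcCone, Finsupp.lift_apply, Finsupp.sum_single_index] <;> simp [h]

lemma demcCone_single_of_not_mem (c : V → V) {k ℓ : ℕ} (x : demcGen A k ℓ)
    (h : (Fin.insertNth 1 (c (x.1 0)) x.1 : Fin (k + 2) → V) ∉ demcGen A (k + 1) ℓ) :
    demcCone A c k ℓ (Finsupp.single x 1) = 0 := by
  rw [demcCone, Finsupp.lift_apply, Finsupp.sum_single_index] <;> simp [h]

end Chains

section LinGraph

variable {n : ℕ}

lemma isEmpty_demcGen_linGraph_of_lt {k ℓ : ℕ} (h : ℓ < k) :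
    IsEmpty (demcGen (linGraph n) k ℓ) := by
  refine ⟨fun ⟨x, hinj, hreach, hlen⟩ => h.not_ge ?_⟩
  calc k = ∑ _i : Fin k, 1 := by simp
    _ ≤ dlen (linGraph n) x := Finset.sum_le_sum fun i _ => by
      have hle := dreach_linGraph_iff.mp (hreach i)
      have hlt : x i.castSucc < x i.succ := hle.lt_of_ne (hinj.ne Fin.castSucc_lt_succ.ne)
      rw [ddist_linGraph hle]
      exact Nat.sub_pos_of_lt hlt
    _ = ℓ := hlen

lemma comp_succAbove_mem_demcGen_linGraph {k ℓ : ℕ} {x : Fin (k + 2) → Fin n}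
    (hx : x ∈ demcGen (linGraph n) (k + 1) ℓ) (i : Fin k) :
    x ∘ i.castSucc.succ.succAbove ∈ demcGen (linGraph n) k ℓ := by
  rw [mem_demcGen_linGraph_iff] at hx ⊢
  refine ⟨hx.1.comp (Fin.strictMono_succAbove _), ?_⟩
  simp only [Function.comp_apply]
  rw [Fin.succAbove_ne_zero_zero (Fin.succ_ne_zero _),
    Fin.succAbove_ne_last_last (Fin.succ_castSucc i ▸ Fin.castSucc_ne_last _)]
  exact hx.2

lemma demcFace_linGraph {k ℓ : ℕ} (x : demcGen (linGraph n) (k + 1) ℓ) (i : Fin k) :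
    demcFace (linGraph n) k ℓ i.castSucc.succ x =
      Finsupp.single ⟨_, comp_succAbove_mem_demcGen_linGraph x.2 i⟩ 1 :=
  demcFace_of_mem _ _ x _

lemma insertNth_succ_mem_demcGen_linGraph {k ℓ : ℕ} {x : Fin (k + 2) → Fin n}
    (hx : x ∈ demcGen (linGraph n) (k + 1) ℓ) (h : x 1 ≠ Order.succ (x 0)) :
    (Fin.insertNth 1 (Order.succ (x 0)) x : Fin (k + 3) → Fin n) ∈
      demcGen (linGraph n) (k + 2) ℓ := by
  rw [mem_demcGen_linGraph_iff] at hx ⊢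
  have h01 : x 0 < x 1 := hx.1 Fin.zero_lt_one
  refine ⟨Fin.strictMono_insertNth_one hx.1 (Order.lt_succ_of_not_isMax (not_isMax_of_lt h01))
    ((Order.succ_le_of_lt h01).lt_of_ne h.symm), ?_⟩
  rw [Fin.insertNth_one_apply_last, Fin.insertNth_one_apply_zero]
  exact hx.2

def demcGenLinGraphOneOneEquiv : demcGen (linGraph n) 1 1 ≃ Fin (n - 1) where
  toFun x := ⟨x.1 0, by
    have h := (mem_demcGen_linGraph_iff.mp x.2).2
    have := (x.1 (Fin.last 1)).isLt
    omega⟩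
  invFun a := ⟨![⟨a, by omega⟩, ⟨a + 1, by omega⟩],
    mem_demcGen_linGraph_iff.mpr ⟨by simp [Fin.strictMono_iff_lt_succ, Fin.lt_def], rfl⟩⟩
  left_inv x := Subtype.ext <| funext fun i => by
    fin_cases i
    · rfl
    · exact Fin.ext (mem_demcGen_linGraph_iff.mp x.2).2.symm
  right_inv a := rfl

end LinGraph

section Cone

variable {n : ℕ}

lemma demcD_cone_add_cone_demcD_single_of_ne {k ℓ : ℕ} (x : demcGen (linGraph n) (k + 1) ℓ)
    (h : x.1 1 ≠ Order.succ (x.1 0)) :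
    demcD (linGraph n) (k + 1) ℓ (demcCone (linGraph n) Order.succ (k + 1) ℓ (Finsupp.single x 1)) +
      demcCone (linGraph n) Order.succ k ℓ (demcD (linGraph n) k ℓ (Finsupp.single x 1)) =
      -Finsupp.single x 1 := by
  set y : demcGen (linGraph n) (k + 2) ℓ := ⟨_, insertNth_succ_mem_demcGen_linGraph x.2 h⟩
  have hface_one : demcFace (linGraph n) (k + 1) ℓ (0 : Fin (k + 1)).castSucc.succ y =
      Finsupp.single x 1 := by
    rw [demcFace_linGraph]
    congr 2
    exact Fin.insertNth_comp_succAbove _ _ _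
  have hface_succ (i : Fin k) : demcFace (linGraph n) (k + 1) ℓ i.succ.castSucc.succ y =
      demcCone (linGraph n) Order.succ k ℓ (demcFace (linGraph n) k ℓ i.castSucc.succ x) := by
    set z := x.1 ∘ i.castSucc.succ.succAbove
    have hcomm : y.1 ∘ i.succ.castSucc.succ.succAbove = Fin.insertNth 1 (Order.succ (z 0)) z := by
      rw [show z 0 = x.1 0 from congrArg x.1 (Fin.succAbove_ne_zero_zero (Fin.succ_ne_zero _)),
        ← Fin.succ_castSucc]
      exact Fin.insertNth_one_comp_succAbove_succ _ _ (Fin.succ_ne_zero _)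
    rw [demcFace_linGraph, demcFace_linGraph, demcCone_single_of_mem _ _ _
      (hcomm ▸ comp_succAbove_mem_demcGen_linGraph y.2 i.succ)]
    congr 2
  have hcone : demcCone (linGraph n) Order.succ (k + 1) ℓ (Finsupp.single x 1) =
      Finsupp.single y 1 :=
    demcCone_single_of_mem _ _ x y.2
  rw [hcone, demcD_single, demcD_single, Fin.sum_univ_succ, map_sum, hface_one]
  have hcancel (i : Fin k) (c : dEMC (linGraph n) (k + 1) ℓ) :
      (-1 : ℤ) ^ ((i.succ : ℕ) + 1) • c + (-1 : ℤ) ^ ((i : ℕ) + 1) • c = 0 := by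
    rw [Fin.val_succ, pow_succ, mul_neg_one, neg_smul, neg_add_cancel]
  simp only [hface_succ, map_smul, add_assoc, ← Finset.sum_add_distrib, hcancel,
    Finset.sum_const_zero, add_zero, Fin.val_zero, zero_add, pow_one, neg_one_smul]

lemma demcCone_demcD_single_of_eq {k ℓ : ℕ} (x : demcGen (linGraph n) (k + 2) ℓ)
    (h : x.1 1 = Order.succ (x.1 0)) :
    demcCone (linGraph n) Order.succ (k + 1) ℓ (demcD (linGraph n) (k + 1) ℓ (Finsupp.single x 1)) =
      -Finsupp.single x 1 := by
  have hface_one : demcCone (linGraph n) Order.succ (k + 1) ℓ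
      (demcFace (linGraph n) (k + 1) ℓ (0 : Fin (k + 1)).castSucc.succ x) = Finsupp.single x 1 := by
    set z := x.1 ∘ (0 : Fin (k + 1)).castSucc.succ.succAbove
    have hx : (Fin.insertNth 1 (Order.succ (z 0)) z : Fin (k + 3) → Fin n) = x.1 := by
      have hz0 : z 0 = x.1 0 := congrArg x.1 (Fin.succAbove_ne_zero_zero (Fin.succ_ne_zero _))
      rw [hz0, ← h]
      exact Fin.insertNth_self_removeNth 1 x.1
    rw [demcFace_linGraph, demcCone_single_of_mem _ _ _ (by dsimp only; rw [hx]; exact x.2)]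
    congr 2
  have hface_succ (i : Fin k) : demcCone (linGraph n) Order.succ (k + 1) ℓ
      (demcFace (linGraph n) (k + 1) ℓ i.succ.castSucc.succ x) = 0 := by
    set z := x.1 ∘ i.succ.castSucc.succ.succAbove
    have hz : Order.succ (z 0) = z 1 := by
      simp only [z, Function.comp_apply]
      rw [Fin.succAbove_ne_zero_zero (Fin.succ_ne_zero _),
        Fin.succAbove_of_castSucc_lt _ _ (by simp [Fin.lt_def]), Fin.castSucc_one, h]
    rw [demcFace_linGraph, demcCone_single_of_not_mem _ _ _
      (hz ▸ insertNth_one_self_not_mem_demcGen _ z)]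
  rw [demcD_single, map_sum, Fin.sum_univ_succ]
  simp only [map_smul, map_neg, hface_one, hface_succ, smul_zero, Finset.sum_const_zero, add_zero,
    Fin.val_zero, zero_add, pow_one, neg_one_smul]

lemma demcD_cone_add_cone_demcD_single {k ℓ : ℕ} (hkℓ : k ≠ 0 ∨ ℓ ≠ 1)
    (x : demcGen (linGraph n) (k + 1) ℓ) :
    demcD (linGraph n) (k + 1) ℓ (demcCone (linGraph n) Order.succ (k + 1) ℓ (Finsupp.single x 1)) +
      demcCone (linGraph n) Order.succ k ℓ (demcD (linGraph n) k ℓ (Finsupp.single x 1)) =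
      -Finsupp.single x 1 := by
  by_cases h : x.1 1 = Order.succ (x.1 0)
  · rcases k with _ | k
    · obtain ⟨hsm, hlast⟩ := mem_demcGen_linGraph_iff.mp x.2
      have hcov : x.1 0 ⋖ x.1 1 :=
        h ▸ Order.covBy_succ_of_not_isMax (not_isMax_of_lt (hsm Fin.zero_lt_one))
      rw [Fin.covBy_iff, Nat.covBy_iff_add_one_eq] at hcov
      have : ((x.1 1 : Fin n) : ℕ) = x.1 0 + ℓ := hlast
      omega
    · rw [demcCone_single_of_not_mem _ _ x (h ▸ insertNth_one_self_not_mem_demcGen _ x.1),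
        map_zero, zero_add, demcCone_demcD_single_of_eq x h]
  · exact demcD_cone_add_cone_demcD_single_of_ne x h

lemma demcD_cone_add_cone_demcD {k ℓ : ℕ} (hkℓ : k ≠ 0 ∨ ℓ ≠ 1)
    (c : dEMC (linGraph n) (k + 1) ℓ) :
    demcD (linGraph n) (k + 1) ℓ (demcCone (linGraph n) Order.succ (k + 1) ℓ c) +
      demcCone (linGraph n) Order.succ k ℓ (demcD (linGraph n) k ℓ c) = -c := by
  induction c using Finsupp.induction_linear with
  | zero => simp
  | add c d hc hd => rw [map_add, map_add, map_add, map_add, add_add_add_comm, hc, hd, neg_add]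
  | single x b =>
    rw [← mul_one b, ← Finsupp.smul_single', map_smul, map_smul, map_smul, map_smul, ← smul_add,
      demcD_cone_add_cone_demcD_single hkℓ x, smul_neg]

lemma demcCycles_linGraph_le_range {k ℓ : ℕ} (hkℓ : k ≠ 0 ∨ ℓ ≠ 1) :
    demcCycles (linGraph n) (k + 1) ℓ ≤ LinearMap.range (demcD (linGraph n) (k + 1) ℓ) := by
  intro z (hz : demcD (linGraph n) k ℓ z = 0)
  refine ⟨-demcCone (linGraph n) Order.succ (k + 1) ℓ z, ?_⟩
  have := demcD_cone_add_cone_demcD hkℓ z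
  rw [hz, map_zero, add_zero] at this
  rw [map_neg, this, neg_neg]

end Cone

/-- eulerian magnitude homology of the directed linear graph `L_n` is
nontrivial only in bidegrees (0,0) and (1,1), of ranks `n` and `n-1` respectively. -/
theorem emh_directed_linear_graph (n : ℕ) :
    Module.finrank ℤ (dEMH (linGraph n) 0 0) = n ∧
    Module.finrank ℤ (dEMH (linGraph n) 1 1) = n - 1 ∧
    ∀ k ℓ : ℕ, ¬ (k = 0 ∧ ℓ = 0) → ¬ (k = 1 ∧ ℓ = 1) →
      Subsingleton (dEMH (linGraph n) k ℓ) := by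
  refine ⟨?_, ?_, fun k ℓ h00 h11 => ?_⟩
  · have := isEmpty_demcGen_linGraph_of_lt (n := n) (k := 1) (ℓ := 0) one_pos
    rw [finrank_dEMH_of_cycles_eq_top _ rfl (demcD_eq_zero_of_isEmpty _),
      Nat.card_congr (demcGenZeroEquiv _), Nat.card_fin]
  · have := isEmpty_demcGen_linGraph_of_lt (n := n) (k := 2) (ℓ := 1) one_lt_two
    rw [finrank_dEMH_of_cycles_eq_top _ (by rw [demcCycles, demcD_zero, LinearMap.ker_zero])
      (demcD_eq_zero_of_isEmpty _), Nat.card_congr demcGenLinGraphOneOneEquiv, Nat.card_fin]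
  · rcases k with _ | k
    · have := isEmpty_demcGen_zero (linGraph n) (by omega : ℓ ≠ 0)
      infer_instance
    · exact dEMH_subsingleton_of_le_range _ (demcCycles_linGraph_le_range (by omega))
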